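/- arXiv:1804.04027 — 13 statements merged into one kernel-verified Lean document; each statement's English description precedes it below -/
import Mathlib

section
/- Let ε > 0, v_l, v_r > 0 and u_l, u_r ∈ ℝ. Then the condition u_r - u_l = ((u_l - √(u_l² + 4ε v_l))/(2 v_l))·(v_r - v_l) holds if and only if (-u_l - √(u_l² + 4ε v_l))/(2ε) = (-u_r - √(u_r² + 4ε v_r))/(2ε), i.e., the first Riemann invariant w is constant across the 1-wave curve. -/
theorem one_wave_curve_iff_w_const (ε ul ur vl vr : ℝ) (hε : 0 < ε)
    (hvl : 0 < vl) (hvr : 0 < vr) :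
    ur - ul = ((ul - Real.sqrt (ul ^ 2 + 4 * ε * vl)) / (2 * vl)) * (vr - vl) ↔
      (-ul - Real.sqrt (ul ^ 2 + 4 * ε * vl)) / (2 * ε) =
        (-ur - Real.sqrt (ur ^ 2 + 4 * ε * vr)) / (2 * ε) := by
  set sl := Real.sqrt (ul ^ 2 + 4 * ε * vl) with hsl_def
  set sr := Real.sqrt (ur ^ 2 + 4 * ε * vr) with hsr_def
  have hl0 : (0:ℝ) ≤ ul ^ 2 + 4 * ε * vl := by positivity
  have hsl2 : sl ^ 2 = ul ^ 2 + 4 * ε * vl := Real.sq_sqrt hl0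
  have habs : |ul| < sl := by
    rw [hsl_def, ← Real.sqrt_sq_eq_abs]
    exact Real.sqrt_lt_sqrt (sq_nonneg ul) (by nlinarith)
  have h_ulsl : 0 < ul + sl := by
    have := neg_abs_le ul
    linarith
  have h2vl : (2*vl) ≠ 0 := by positivity
  have h2ε : (2*ε) ≠ 0 := by positivity
  constructor
  · intro hcurve
    rw [div_mul_eq_mul_div, eq_div_iff h2vl] at hcurve
    have h2' : ((ur-ul)*(ul+sl))*(2*vl) = (-(2*ε)*(vr-vl))*(2*vl) := by
      linear_combination (ul+sl)*hcurve - (vr-vl)*hsl2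
    have h2 : (ur-ul)*(ul+sl) = -(2*ε)*(vr-vl) := mul_right_cancel₀ h2vl h2'
    have hsr_sq : ur ^ 2 + 4*ε*vr = (sl + ul - ur)^2 := by
      linear_combination -hsl2 + 2*h2
    have h5 : 0 < (ul+sl) * (ul + sl - 2*ur) := by
      nlinarith [mul_pos hε hvr]
    have h6 : 0 < ul + sl - 2*ur := by nlinarith
    have hpos : (0:ℝ) ≤ sl + ul - ur := by linarith
    have hsr : sr = sl + ul - ur := by
      rw [hsr_def, show ur ^ 2 + 4*ε*vr = (sl + ul - ur)^2 from hsr_sq,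
        Real.sqrt_sq hpos]
    rw [hsr]; ring
  · intro heq
    have h0 : sr = sl + ul - ur := by
      field_simp at heq
      linarith
    have h4vr' : (sl + ul - ur)^2 = ur ^ 2 + 4*ε*vr := by
      rw [← h0, hsr_def, Real.sq_sqrt (by positivity)]
    rw [div_mul_eq_mul_div, eq_div_iff h2vl]
    have haux : 2*ε*((ur-ul)*(2*vl)) = 2*ε*((ul-sl)*(vr-vl)) := by
      linear_combination ((ul+sl-2*ur)/2)*hsl2 + ((ul-sl)/2)*h4vr'
    exact mul_left_cancel₀ h2ε haux
end

section
/- Let ε > 0, v_l, v_r > 0 and u_l, u_r ∈ ℝ. Then u_r - u_l = ((u_l + √(u_l² + 4ε v_l))/(2 v_l))·(v_r - v_l) holds if and only if (-u_l + √(u_l² + 4ε v_l))/(2ε) = (-u_r + √(u_r² + 4ε v_r))/(2ε), i.e., the second Riemann invariant z is constant across the 2-wave curve. -/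
theorem two_wave_curve_iff_z_const (ε ul ur vl vr : ℝ) (hε : 0 < ε)
    (hvl : 0 < vl) (hvr : 0 < vr) :
    ur - ul = ((ul + Real.sqrt (ul ^ 2 + 4 * ε * vl)) / (2 * vl)) * (vr - vl) ↔
      (-ul + Real.sqrt (ul ^ 2 + 4 * ε * vl)) / (2 * ε) =
        (-ur + Real.sqrt (ur ^ 2 + 4 * ε * vr)) / (2 * ε) := by
  set a := Real.sqrt (ul ^ 2 + 4 * ε * vl) with ha_def
  set b := Real.sqrt (ur ^ 2 + 4 * ε * vr) with hb_def
  have hl : (0:ℝ) ≤ ul ^ 2 + 4 * ε * vl := by positivity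
  have hrr : (0:ℝ) ≤ ur ^ 2 + 4 * ε * vr := by positivity
  have ha2 : a ^ 2 = ul ^ 2 + 4 * ε * vl := Real.sq_sqrt hl
  have hb2 : b ^ 2 = ur ^ 2 + 4 * ε * vr := Real.sq_sqrt hrr
  have habs : |ul| < a := by
    rw [ha_def, ← Real.sqrt_sq_eq_abs]
    exact Real.sqrt_lt_sqrt (sq_nonneg ul) (by nlinarith)
  have haul : ul < a := lt_of_le_of_lt (le_abs_self ul) habs
  have haul2 : -a < ul := by
    have := (abs_lt.mp habs).1; linarith
  have hbur : ur < b := lt_of_le_of_lt (le_abs_self ur) (by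
    rw [hb_def, ← Real.sqrt_sq_eq_abs]
    exact Real.sqrt_lt_sqrt (sq_nonneg ur) (by nlinarith))
  have h1 : (ul + a) * (a - ul) = 4 * ε * vl := by nlinarith
  constructor
  · intro h
    have h' : (ur - ul) * (2 * vl) = (ul + a) * (vr - vl) := by
      field_simp at h; linarith
    have key : (a + ur - ul) ^ 2 = ur ^ 2 + 4 * ε * vr := by
      nlinarith [h', h1, ha2, mul_pos hε hvl]
    have hpos : 0 < a + ur - ul := by nlinarith [mul_pos hε hvr]
    have hb' : b = a + ur - ul := by
      rw [hb_def, ← key, Real.sqrt_sq hpos.le]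
    rw [hb']; ring
  · intro h
    have hb' : b = a + ur - ul := by
      field_simp at h; linarith
    have key2 : (a + ur - ul) ^ 2 = ur ^ 2 + 4 * ε * vr := by
      rw [← hb']; exact hb2
    have key : 2 * ε * (vr - vl) = (ur - ul) * (a - ul) := by nlinarith
    have h3 : 2 * ε * (2 * vl * (ur - ul)) = 2 * ε * ((ul + a) * (vr - vl)) := by
      linear_combination (-(ul + a)) * key - (ur - ul) * h1
    have h4 : 2 * vl * (ur - ul) = (ul + a) * (vr - vl) :=
      mul_left_cancel₀ (by positivity) h3
    field_simp
    linarith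
end

section
/- Let ε > 0, u_l, u_r ∈ ℝ with u_l ≠ u_r, and v_l, v_r > 0 with v_l ≠ v_r. If the Rankine–Hugoniot relations -σ(u_l - u_r) + (u_l² + ε v_l - u_r² - ε v_r) = 0 and -σ(v_l - v_r) + (v_l u_l - v_r u_r) = 0 hold for some σ ∈ ℝ, then the ratio s = (v_l - v_r)/(u_l - u_r) satisfies the quadratic equation ε s² + (u_l + u_r) s - (u_l v_l - u_r v_r)/(u_l - u_r) = 0, and hence s = (-u_l ± √(u_l² + 4ε v_l))/(2ε). -/
theorem Real.eq_quadratic_root_of_eq_zero {a b c x : ℝ} (ha : a ≠ 0)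
    (h : a * (x * x) + b * x + c = 0) :
    x = (-b + √(discrim a b c)) / (2 * a) ∨ x = (-b - √(discrim a b c)) / (2 * a) := by
  have hd : discrim a b c = √(discrim a b c) * √(discrim a b c) :=
    (Real.mul_self_sqrt (discrim_eq_sq_of_quadratic_eq_zero h ▸ sq_nonneg _)).symm
  exact (quadratic_eq_zero_iff ha hd x).1 h

/-- Eliminating the speed `σ` between the two jump conditions. -/
theorem rankineHugoniot_ratio_quadratic {K : Type*} [Field K] {ε σ ul ur vl vr : K}
    (hu : ul ≠ ur)
    (h1 : -σ * (ul - ur) + (ul ^ 2 + ε * vl - ur ^ 2 - ε * vr) = 0)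
    (h2 : -σ * (vl - vr) + (vl * ul - vr * ur) = 0) :
    ε * ((vl - vr) / (ul - ur)) ^ 2 + ul * ((vl - vr) / (ul - ur)) - vl = 0 := by
  have hd : ul - ur ≠ 0 := sub_ne_zero.mpr hu
  field_simp
  linear_combination (vl - vr) * h1 - (ul - ur) * h2

theorem RH_ratio_quadratic_general (ε σ ul ur vl vr : ℝ) (hε : 0 < ε)
    (hu : ul ≠ ur)
    (h1 : -σ * (ul - ur) + (ul ^ 2 + ε * vl - ur ^ 2 - ε * vr) = 0)
    (h2 : -σ * (vl - vr) + (vl * ul - vr * ur) = 0) :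
    let s := (vl - vr) / (ul - ur)
    ε * s ^ 2 + (ul + ur) * s - (ul * vl - ur * vr) / (ul - ur) = 0 ∧
      (s = (-ul + Real.sqrt (ul ^ 2 + 4 * ε * vl)) / (2 * ε) ∨
        s = (-ul - Real.sqrt (ul ^ 2 + 4 * ε * vl)) / (2 * ε)) := by
  intro s
  have hq : ε * s ^ 2 + ul * s - vl = 0 := rankineHugoniot_ratio_quadratic hu h1 h2
  have hflux : (ul * vl - ur * vr) / (ul - ur) = vl + ur * s := by
    have hd : ul - ur ≠ 0 := sub_ne_zero.mpr hu
    simp only [s]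
    field_simp
    ring
  have hdisc : discrim ε ul (-vl) = ul ^ 2 + 4 * ε * vl := by
    rw [discrim]
    ring
  refine ⟨by rw [hflux]; linear_combination hq, ?_⟩
  rw [← hdisc]
  exact Real.eq_quadratic_root_of_eq_zero hε.ne' (by linear_combination hq)

theorem RH_ratio_quadratic (ε σ ul ur vl vr : ℝ) (hε : 0 < ε)
    (hu : ul ≠ ur) (hvl : 0 < vl) (hvr : 0 < vr) (hv : vl ≠ vr)
    (h1 : -σ * (ul - ur) + (ul ^ 2 + ε * vl - ur ^ 2 - ε * vr) = 0)
    (h2 : -σ * (vl - vr) + (vl * ul - vr * ur) = 0) :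
    let s := (vl - vr) / (ul - ur)
    ε * s ^ 2 + (ul + ur) * s - (ul * vl - ur * vr) / (ul - ur) = 0 ∧
      (s = (-ul + Real.sqrt (ul ^ 2 + 4 * ε * vl)) / (2 * ε) ∨
        s = (-ul - Real.sqrt (ul ^ 2 + 4 * ε * vl)) / (2 * ε)) :=
  RH_ratio_quadratic_general ε σ ul ur vl vr hε hu h1 h2
end

section
/- Let u_- ≥ 0 ≥ u_+ with u_- > u_+ and v_± > 0. The functions x(t) = (u_- + u_+)t, u_δ(t) = u_- + u_+, and w(t) = (u_- v_+ - u_+ v_-)t satisfy the generalized Rankine–Hugoniot relations dx/dt = u_δ(t), -u_δ(t)(u_- - u_+) + (u_-² - u_+²) = 0, and dw/dt = -u_δ(t)(v_- - v_+) + (u_- v_- - u_+ v_+), together with the entropy condition 2u_+ ≤ u_+ ≤ u_δ(t) ≤ u_- ≤ 2u_-. -/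
theorem delta_shock_solves_GRH (um up vm vp : ℝ)
    (h1 : um ≥ 0) (h2 : 0 ≥ up) (h3 : um > up) (hvm : 0 < vm) (hvp : 0 < vp) :
    (∀ t : ℝ, HasDerivAt (fun t : ℝ => (um + up) * t) (um + up) t) ∧
    -(um + up) * (um - up) + (um ^ 2 - up ^ 2) = 0 ∧
    (∀ t : ℝ, HasDerivAt (fun t : ℝ => (um * vp - up * vm) * t)
      (-(um + up) * (vm - vp) + (um * vm - up * vp)) t) ∧
    (2 * up ≤ up ∧ up ≤ um + up ∧ um + up ≤ um ∧ um ≤ 2 * um) := by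
  refine ⟨fun t => ?_, by ring, fun t => ?_, by linarith, by linarith, by linarith, by linarith⟩
  · simpa using (hasDerivAt_id t).const_mul (um + up)
  · have : -(um + up) * (vm - vp) + (um * vm - up * vp) = um * vp - up * vm := by ring
    rw [this]
    simpa using (hasDerivAt_id t).const_mul (um * vp - up * vm)
end

section
/- Let u_- > u_+, v_± > 0, u_+/v_+ < u_- /v_-. For ε > 0 define v_*(ε) = (u_+ - u_- - ((u_+ + √(u_+² + 4ε v_+))/(2v_+))v_+ + ((u_- - √(u_-² + 4ε v_-))/(2v_-))v_-) / ((u_- - √(u_-² + 4ε v_-))/(2v_-) - (u_+ + √(u_+² + 4ε v_+))/(2v_+)). If u_- > u_+ > 0, then v_*(ε) → (u_- /u_+)v_+ as ε → 0⁺. -/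
theorem vstar_limit_pos (um up vm vp : ℝ) (h : um > up) (hp : up > 0)
    (hvm : 0 < vm) (hvp : 0 < vp) (hr : up / vp < um / vm) :
    Filter.Tendsto (fun e : ℝ =>
      (up - um - ((up + Real.sqrt (up ^ 2 + 4 * e * vp)) / (2 * vp)) * vp + ((um - Real.sqrt (um ^ 2 + 4 * e * vm)) / (2 * vm)) * vm) / ((um - Real.sqrt (um ^ 2 + 4 * e * vm)) / (2 * vm) - (up + Real.sqrt (up ^ 2 + 4 * e * vp)) / (2 * vp)))
      (nhdsWithin 0 (Set.Ioi 0)) (nhds ((um / up) * vp)) := by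
  have hum0 : (0:ℝ) < um := lt_trans hp h
  have hup : Real.sqrt (up ^ 2 + 4 * 0 * vp) = up := by
    rw [show up ^ 2 + 4 * (0:ℝ) * vp = up ^ 2 by ring, Real.sqrt_sq hp.le]
  have hum : Real.sqrt (um ^ 2 + 4 * 0 * vm) = um := by
    rw [show um ^ 2 + 4 * (0:ℝ) * vm = um ^ 2 by ring, Real.sqrt_sq hum0.le]
  have hden : ((um - Real.sqrt (um ^ 2 + 4 * 0 * vm)) / (2 * vm) -
      (up + Real.sqrt (up ^ 2 + 4 * 0 * vp)) / (2 * vp)) ≠ 0 := by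
    rw [hup, hum]
    have : (up + up) / (2 * vp) > 0 := by positivity
    simp only [sub_self, zero_div, zero_sub, ne_eq, neg_eq_zero]
    exact ne_of_gt this
  have hcont : ContinuousAt (fun e : ℝ =>
      (up - um - ((up + Real.sqrt (up ^ 2 + 4 * e * vp)) / (2 * vp)) * vp + ((um - Real.sqrt (um ^ 2 + 4 * e * vm)) / (2 * vm)) * vm) / ((um - Real.sqrt (um ^ 2 + 4 * e * vm)) / (2 * vm) - (up + Real.sqrt (up ^ 2 + 4 * e * vp)) / (2 * vp))) 0 := by
    apply ContinuousAt.div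
    · fun_prop
    · fun_prop
    · exact hden
  have hval : (up - um - ((up + Real.sqrt (up ^ 2 + 4 * 0 * vp)) / (2 * vp)) * vp + ((um - Real.sqrt (um ^ 2 + 4 * 0 * vm)) / (2 * vm)) * vm) / ((um - Real.sqrt (um ^ 2 + 4 * 0 * vm)) / (2 * vm) - (up + Real.sqrt (up ^ 2 + 4 * 0 * vp)) / (2 * vp)) = (um / up) * vp := by
    rw [hup, hum]
    field_simp
    field_simp [hp.ne']
    ring
  have := hcont.continuousWithinAt (s := Set.Ioi 0) |>.tendsto
  rw [hval] at this
  exact this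
end

section
/- Let u_- > u_+, v_± > 0, u_+/v_+ < u_- /v_-. With v_*(ε) as in the two-shock intermediate state formula, if 0 > u_- > u_+ then v_*(ε) → (u_+/u_-)v_- as ε → 0⁺. -/
/-!
As `ε → 0`, `√(u² + 4εv) → |u| = -u` for `u ≤ 0`, so the right-shock term
`(u₊ + √(u₊² + 4εv₊)) / (2v₊)` tends to `0` and the left-shock term
`(u₋ - √(u₋² + 4εv₋)) / (2v₋)` tends to `u₋ / v₋ ≠ 0`. The expression for `v_*(ε)` is therefore
continuous at `ε = 0`, where it equals `u₊ / (u₋ / v₋)`.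
-/

open Filter Topology

lemma tendsto_sqrt_sq_add_mul (a v : ℝ) :
    Tendsto (fun e : ℝ => √(a ^ 2 + 4 * e * v)) (𝓝 0) (𝓝 |a|) := by
  have hcont : Continuous (fun e : ℝ => √(a ^ 2 + 4 * e * v)) := by fun_prop
  simpa [Real.sqrt_sq_eq_abs] using hcont.tendsto 0

lemma tendsto_add_sqrt_div_of_nonpos {u : ℝ} (hu : u ≤ 0) (v : ℝ) :
    Tendsto (fun e : ℝ => (u + √(u ^ 2 + 4 * e * v)) / (2 * v)) (𝓝 0) (𝓝 0) := by
  have h := ((tendsto_sqrt_sq_add_mul u v).const_add u).div_const (2 * v)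
  rwa [abs_of_nonpos hu, add_neg_cancel, zero_div] at h

lemma tendsto_sub_sqrt_div_of_nonpos {u v : ℝ} (hu : u ≤ 0) (hv : v ≠ 0) :
    Tendsto (fun e : ℝ => (u - √(u ^ 2 + 4 * e * v)) / (2 * v)) (𝓝 0) (𝓝 (u / v)) := by
  have h := ((tendsto_sqrt_sq_add_mul u v).const_sub u).div_const (2 * v)
  convert h using 2
  rw [abs_of_nonpos hu]
  field_simp
  ring

theorem vstar_limit_neg_general (um up vm vp : ℝ) (h : um > up) (hm : 0 > um)
    (hvm : 0 < vm) :
    Filter.Tendsto (fun e : ℝ =>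
      (up - um - ((up + Real.sqrt (up ^ 2 + 4 * e * vp)) / (2 * vp)) * vp + ((um - Real.sqrt (um ^ 2 + 4 * e * vm)) / (2 * vm)) * vm) / ((um - Real.sqrt (um ^ 2 + 4 * e * vm)) / (2 * vm) - (up + Real.sqrt (up ^ 2 + 4 * e * vp)) / (2 * vp)))
      (nhdsWithin 0 (Set.Ioi 0)) (nhds ((up / um) * vm)) := by
  have hplus := tendsto_add_sqrt_div_of_nonpos (h.trans hm).le vp
  have hminus := tendsto_sub_sqrt_div_of_nonpos hm.le hvm.ne'
  have hden : um / vm - 0 ≠ 0 := by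
    rw [sub_zero]
    exact div_ne_zero hm.ne hvm.ne'
  have hlim := (((tendsto_const_nhds (x := up - um)).sub (hplus.mul_const vp)).add
    (hminus.mul_const vm)).div (hminus.sub hplus) hden
  have hval : (up - um - 0 * vp + um / vm * vm) / (um / vm - 0) = up / um * vm := by
    rw [zero_mul, sub_zero, sub_zero, div_mul_cancel₀ _ hvm.ne', sub_add_cancel, div_div_eq_mul_div,
      mul_div_right_comm]
  rw [hval] at hlim
  exact hlim.mono_left nhdsWithin_le_nhds

theorem vstar_limit_neg (um up vm vp : ℝ) (h : um > up) (hm : 0 > um)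
    (hvm : 0 < vm) (hvp : 0 < vp) (hr : up / vp < um / vm) :
    Filter.Tendsto (fun e : ℝ =>
      (up - um - ((up + Real.sqrt (up ^ 2 + 4 * e * vp)) / (2 * vp)) * vp + ((um - Real.sqrt (um ^ 2 + 4 * e * vm)) / (2 * vm)) * vm) / ((um - Real.sqrt (um ^ 2 + 4 * e * vm)) / (2 * vm) - (up + Real.sqrt (up ^ 2 + 4 * e * vp)) / (2 * vp)))
      (nhdsWithin 0 (Set.Ioi 0)) (nhds ((up / um) * vm)) :=
  vstar_limit_neg_general um up vm vp h hm hvm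
end

section
/- Let u_- ≥ 0 ≥ u_+ with u_- > u_+ and v_± > 0. With v_*(ε) as in the two-shock intermediate state formula, v_*(ε) → +∞ as ε → 0⁺ (i.e., for every M there is δ > 0 such that v_*(ε) > M for all 0 < ε < δ). -/
open Filter Real Topology

/-!
The denominator of `v_*(ε)` is the gap `r₋(ε) - r₊(ε)` between the negative root of
`v₋ x² - u₋ x - ε` and the positive root of `v₊ x² - u₊ x - ε`; it is negative for `ε > 0` and
tends to `0` as `ε → 0⁺` because `u₋ ≥ 0 ≥ u₊`. The numerator tends to `u₊ - u₋ < 0`, so the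
quotient tends to `+∞`.
-/

lemma tendsto_div_atTop_of_tendsto_neg_of_tendsto_nhdsLT_zero {α : Type*} {l : Filter α}
    {f g : α → ℝ} {c : ℝ} (hc : c < 0) (hf : Tendsto f l (𝓝 c)) (hg : Tendsto g l (𝓝[<] 0)) :
    Tendsto (fun x => f x / g x) l atTop := by
  simp only [div_eq_mul_inv]
  exact hf.neg_mul_atBot hc (tendsto_inv_nhdsLT_zero.comp hg)

lemma abs_lt_sqrt_sq_add (a : ℝ) {t : ℝ} (ht : 0 < t) : |a| < √(a ^ 2 + t) :=
  (lt_sqrt (abs_nonneg a)).2 (by rw [sq_abs]; linarith)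

lemma sub_sqrt_sq_add_neg (a : ℝ) {t : ℝ} (ht : 0 < t) : a - √(a ^ 2 + t) < 0 := by
  linarith [le_abs_self a, abs_lt_sqrt_sq_add a ht]

lemma add_sqrt_sq_add_pos (a : ℝ) {t : ℝ} (ht : 0 < t) : 0 < a + √(a ^ 2 + t) := by
  linarith [neg_abs_le a, abs_lt_sqrt_sq_add a ht]

lemma root_gap_neg {um up vm vp e : ℝ} (hvm : 0 < vm) (hvp : 0 < vp) (he : 0 < e) :
    (um - √(um ^ 2 + 4 * e * vm)) / (2 * vm) - (up + √(up ^ 2 + 4 * e * vp)) / (2 * vp) < 0 := by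
  have hneg := div_neg_of_neg_of_pos (sub_sqrt_sq_add_neg um (by positivity : 0 < 4 * e * vm))
    (by positivity : 0 < 2 * vm)
  have hpos := div_pos (add_sqrt_sq_add_pos up (by positivity : 0 < 4 * e * vp))
    (by positivity : 0 < 2 * vp)
  linarith

theorem vstar_limit_infty (um up vm vp : ℝ) (h1 : um ≥ 0) (h2 : 0 ≥ up)
    (h3 : um > up) (hvm : 0 < vm) (hvp : 0 < vp) :
    Filter.Tendsto (fun e : ℝ =>
      (up - um - ((up + Real.sqrt (up ^ 2 + 4 * e * vp)) / (2 * vp)) * vp + ((um - Real.sqrt (um ^ 2 + 4 * e * vm)) / (2 * vm)) * vm) / ((um - Real.sqrt (um ^ 2 + 4 * e * vm)) / (2 * vm) - (up + Real.sqrt (up ^ 2 + 4 * e * vp)) / (2 * vp)))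
      (nhdsWithin 0 (Set.Ioi 0)) Filter.atTop := by
  have hsqrt_um : √(um ^ 2) = um := sqrt_sq h1
  have hsqrt_up : √(up ^ 2) = -up := by rw [sqrt_sq_eq_abs, abs_of_nonpos h2]
  refine tendsto_div_atTop_of_tendsto_neg_of_tendsto_nhdsLT_zero (sub_neg.2 h3) ?_ ?_
  · refine (Continuous.tendsto' (by fun_prop) 0 _ ?_).mono_left nhdsWithin_le_nhds
    simp only [mul_zero, zero_mul, add_zero, hsqrt_um, hsqrt_up]
    ring
  · refine tendsto_nhdsWithin_iff.2 ⟨(Continuous.tendsto' (by fun_prop) 0 _ ?_).mono_left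
      nhdsWithin_le_nhds, ?_⟩
    · simp only [mul_zero, zero_mul, add_zero, hsqrt_um, hsqrt_up]
      ring
    · filter_upwards [self_mem_nhdsWithin] with e he using root_gap_neg hvm hvp he
end

section
/- Let u_- ≥ 0 ≥ u_+ with u_- > u_+ and v_± > 0, and let v_*(ε) be the two-shock intermediate density and u_*(ε) = u_- + ((u_- - √(u_-² + 4ε v_-))/(2v_-))(v_*(ε) - v_-) the intermediate velocity. Then u_*(ε) → u_- + u_+ as ε → 0⁺. -/
/-!
Rationalizing, the two shock speeds are `-2ε / A` and `2ε / B` with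
`A = u₋ + √(u₋² + 4εv₋)` and `B = √(u₊² + 4εv₊) - u₊`, both positive for `ε > 0`.
The common factor `ε` then cancels from `u_*`, leaving
`u_* = u₋ + (B (u₊ - u₋) + 2ε (v₋ - v₊)) / (A + B)`, which is continuous at `ε = 0`;
there `A = 2u₋` and `B = -2u₊` because `u₋ ≥ 0 ≥ u₊`, and `A + B ≠ 0` because `u₋ > u₊`.
-/

open Filter Topology

namespace TwoShock

lemma sub_sqrt_div_eq {u v e : ℝ} (hv : v ≠ 0) (hd : 0 ≤ u ^ 2 + 4 * e * v)
    (h : u + √(u ^ 2 + 4 * e * v) ≠ 0) :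
    (u - √(u ^ 2 + 4 * e * v)) / (2 * v) = -2 * e / (u + √(u ^ 2 + 4 * e * v)) := by
  have hsq := Real.sq_sqrt hd
  rw [div_eq_div_iff (mul_ne_zero two_ne_zero hv) h]
  linear_combination -hsq

lemma add_sqrt_div_eq {u v e : ℝ} (hv : v ≠ 0) (hd : 0 ≤ u ^ 2 + 4 * e * v)
    (h : √(u ^ 2 + 4 * e * v) - u ≠ 0) :
    (u + √(u ^ 2 + 4 * e * v)) / (2 * v) = 2 * e / (√(u ^ 2 + 4 * e * v) - u) := by
  have hsq := Real.sq_sqrt hd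
  rw [div_eq_div_iff (mul_ne_zero two_ne_zero hv) h]
  linear_combination hsq

lemma abs_lt_sqrt_sq_add {u v e : ℝ} (hv : 0 < v) (he : 0 < e) :
    |u| < √(u ^ 2 + 4 * e * v) := by
  rw [← Real.sqrt_sq_eq_abs]
  exact Real.sqrt_lt_sqrt (sq_nonneg u) (by nlinarith)

lemma tendsto_sqrt_sq_add (u v : ℝ) :
    Tendsto (fun e : ℝ => √(u ^ 2 + 4 * e * v)) (𝓝 0) (𝓝 |u|) := by
  have hc : Continuous fun e : ℝ => √(u ^ 2 + 4 * e * v) := by fun_prop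
  simpa [Real.sqrt_sq_eq_abs] using hc.tendsto 0

lemma intermediate_velocity_eq {um up vm vp e A B : ℝ} (he : e ≠ 0) (hA : A ≠ 0)
    (hB : B ≠ 0) (hAB : A + B ≠ 0) :
    (-2 * e / A) * ((up - um - (2 * e / B) * vp + (-2 * e / A) * vm) /
        (-2 * e / A - 2 * e / B) - vm) =
      (B * (up - um) + 2 * e * (vm - vp)) / (A + B) := by
  have hspeeds : -2 * e / A - 2 * e / B = -2 * e * (A + B) / (A * B) := by
    field_simp
    ring
  rw [hspeeds]
  field_simp
  ring

lemma tendsto_intermediate_velocity {um up : ℝ} (vm vp : ℝ) (hum : 0 ≤ um) (hup : up ≤ 0)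
    (hlt : up < um) :
    Tendsto (fun e : ℝ => um + ((√(up ^ 2 + 4 * e * vp) - up) * (up - um) +
        2 * e * (vm - vp)) / ((um + √(um ^ 2 + 4 * e * vm)) + (√(up ^ 2 + 4 * e * vp) - up)))
      (𝓝 0) (𝓝 (um + up)) := by
  have hA := (tendsto_sqrt_sq_add um vm).const_add um
  have hB := (tendsto_sqrt_sq_add up vp).sub_const up
  rw [abs_of_nonneg hum] at hA
  rw [abs_of_nonpos hup] at hB
  have hlim := (((hB.mul_const (up - um)).add
    ((tendsto_id.const_mul 2).mul_const (vm - vp))).div (hA.add hB)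
      (by linarith)).const_add um
  have hvalue : um + ((-up - up) * (up - um) + 2 * 0 * (vm - vp)) / (um + um + (-up - up)) =
      um + up := by
    rw [add_right_inj, div_eq_iff (by linarith)]
    ring
  rwa [hvalue] at hlim

end TwoShock

open TwoShock in
theorem ustar_limit_delta (um up vm vp : ℝ) (h1 : um ≥ 0) (h2 : 0 ≥ up)
    (h3 : um > up) (hvm : 0 < vm) (hvp : 0 < vp) :
    Filter.Tendsto (fun e : ℝ =>
      um + ((um - Real.sqrt (um ^ 2 + 4 * e * vm)) / (2 * vm)) *
        ((up - um - ((up + Real.sqrt (up ^ 2 + 4 * e * vp)) / (2 * vp)) * vp + ((um - Real.sqrt (um ^ 2 + 4 * e * vm)) / (2 * vm)) * vm) / ((um - Real.sqrt (um ^ 2 + 4 * e * vm)) / (2 * vm) - (up + Real.sqrt (up ^ 2 + 4 * e * vp)) / (2 * vp)) - vm))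
      (nhdsWithin 0 (Set.Ioi 0)) (nhds (um + up)) := by
  refine ((tendsto_intermediate_velocity vm vp h1 h2 h3).mono_left nhdsWithin_le_nhds).congr' ?_
  filter_upwards [self_mem_nhdsWithin] with e (he : 0 < e)
  have hA : 0 < um + √(um ^ 2 + 4 * e * vm) := by
    linarith [neg_abs_le um, abs_lt_sqrt_sq_add (u := um) hvm he]
  have hB : 0 < √(up ^ 2 + 4 * e * vp) - up := by
    linarith [le_abs_self up, abs_lt_sqrt_sq_add (u := up) hvp he]
  have hdm : 0 ≤ um ^ 2 + 4 * e * vm := by positivity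
  have hdp : 0 ≤ up ^ 2 + 4 * e * vp := by positivity
  rw [sub_sqrt_div_eq hvm.ne' hdm hA.ne', add_sqrt_div_eq hvp.ne' hdp hB.ne',
    intermediate_velocity_eq he.ne' hA.ne' hB.ne' (by positivity)]
end

section
/- Let u_- > u_+ > 0, v_± > 0, u_+/v_+ < u_- /v_-, and let u_*(ε) = u_- + ((u_- - √(u_-² + 4ε v_-))/(2v_-))(v_*(ε) - v_-) with v_*(ε) the two-shock intermediate density. Then u_*(ε) → u_- as ε → 0⁺, and the 1-shock speed σ₁(ε) = u_*(ε) + (u_- - √(u_-² + 4ε v_-))/2 also tends to u_- as ε → 0⁺. -/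
theorem ustar_sigma1_limit (um up vm vp : ℝ) (h : um > up) (hp : up > 0)
    (hvm : 0 < vm) (hvp : 0 < vp) (hr : up / vp < um / vm) :
    Filter.Tendsto (fun e : ℝ =>
      um + ((um - Real.sqrt (um ^ 2 + 4 * e * vm)) / (2 * vm)) *
        ((up - um - ((up + Real.sqrt (up ^ 2 + 4 * e * vp)) / (2 * vp)) * vp + ((um - Real.sqrt (um ^ 2 + 4 * e * vm)) / (2 * vm)) * vm) / ((um - Real.sqrt (um ^ 2 + 4 * e * vm)) / (2 * vm) - (up + Real.sqrt (up ^ 2 + 4 * e * vp)) / (2 * vp)) - vm))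
      (nhdsWithin 0 (Set.Ioi 0)) (nhds um) ∧
    Filter.Tendsto (fun e : ℝ =>
      (um + ((um - Real.sqrt (um ^ 2 + 4 * e * vm)) / (2 * vm)) *
        ((up - um - ((up + Real.sqrt (up ^ 2 + 4 * e * vp)) / (2 * vp)) * vp + ((um - Real.sqrt (um ^ 2 + 4 * e * vm)) / (2 * vm)) * vm) / ((um - Real.sqrt (um ^ 2 + 4 * e * vm)) / (2 * vm) - (up + Real.sqrt (up ^ 2 + 4 * e * vp)) / (2 * vp)) - vm)) +
        (um - Real.sqrt (um ^ 2 + 4 * e * vm)) / 2)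
      (nhdsWithin 0 (Set.Ioi 0)) (nhds um) := by
  have hum : 0 < um := hp.trans h
  set A : ℝ → ℝ := fun e => (um - Real.sqrt (um ^ 2 + 4 * e * vm)) / (2 * vm) with hA
  set B : ℝ → ℝ := fun e => (up + Real.sqrt (up ^ 2 + 4 * e * vp)) / (2 * vp) with hB
  have cA : Continuous A := by
    apply Continuous.div_const
    exact continuous_const.sub (Real.continuous_sqrt.comp (by continuity))
  have cB : Continuous B := by
    apply Continuous.div_const
    exact continuous_const.add (Real.continuous_sqrt.comp (by continuity))
  have hA0 : A 0 = 0 := by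
    simp only [hA]
    rw [show um ^ 2 + 4 * (0:ℝ) * vm = um ^ 2 by ring, Real.sqrt_sq hum.le]
    simp
  have hB0 : B 0 = up / vp := by
    simp only [hB]
    rw [show up ^ 2 + 4 * (0:ℝ) * vp = up ^ 2 by ring, Real.sqrt_sq hp.le]
    rw [div_eq_div_iff (by positivity) hvp.ne']
    ring
  have hden : A 0 - B 0 ≠ 0 := by
    rw [hA0, hB0]
    have : (0:ℝ) < up / vp := by positivity
    linarith
  have key : ContinuousAt (fun e : ℝ =>
      um + A e * ((up - um - B e * vp + A e * vm) / (A e - B e) - vm)) 0 := by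
    apply continuousAt_const.add
    apply (cA.continuousAt).mul
    apply ContinuousAt.sub _ continuousAt_const
    exact ContinuousAt.div (by fun_prop) ((cA.sub cB).continuousAt) hden
  have key1 : Filter.Tendsto (fun e : ℝ =>
      um + A e * ((up - um - B e * vp + A e * vm) / (A e - B e) - vm))
      (nhdsWithin 0 (Set.Ioi 0)) (nhds um) := by
    have := key.tendsto
    rw [show um + A 0 * ((up - um - B 0 * vp + A 0 * vm) / (A 0 - B 0) - vm) = um by
      rw [hA0]; ring] at this
    exact this.mono_left nhdsWithin_le_nhds
  constructor
  · exact key1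
  · have c2 : ContinuousAt (fun e : ℝ => (um - Real.sqrt (um ^ 2 + 4 * e * vm)) / 2) 0 := by
      fun_prop
    have t2 : Filter.Tendsto (fun e : ℝ => (um - Real.sqrt (um ^ 2 + 4 * e * vm)) / 2)
        (nhdsWithin 0 (Set.Ioi 0)) (nhds 0) := by
      have := c2.tendsto
      rw [show (um - Real.sqrt (um ^ 2 + 4 * 0 * vm)) / 2 = 0 by
        rw [show um ^ 2 + 4 * (0:ℝ) * vm = um ^ 2 by ring, Real.sqrt_sq hum.le]; ring] at this
      exact this.mono_left nhdsWithin_le_nhds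
    have := key1.add t2
    simpa using this
end

section
/- Let u_- > u_+ > 0, v_± > 0, u_+/v_+ < u_- /v_-. The 2-shock speed σ₂(ε) = u_+ + ((u_+ + √(u_+² + 4ε v_+))/(2v_+))·v_*(ε), where v_*(ε) is the two-shock intermediate density, satisfies σ₂(ε) → u_- + u_+ as ε → 0⁺. -/
/-!
At `ε = 0` the square roots collapse to `√(u²) = u`, so the right slope `(u₊ + √(u₊² + 4εv₊))/(2v₊)`
tends to `u₊/v₊` and the left slope `(u₋ - √(u₋² + 4εv₋))/(2v₋)` to `0`. Hence the intermediate
density `v_*(ε)` tends to `u₋v₊/u₊`, and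
`σ₂(ε) → u₊ + (u₊/v₊)(u₋v₊/u₊) = u₋ + u₊`.
-/

open Filter Topology

noncomputable def shockSlopePlus (u v ε : ℝ) : ℝ := (u + √(u ^ 2 + 4 * ε * v)) / (2 * v)

noncomputable def shockSlopeMinus (u v ε : ℝ) : ℝ := (u - √(u ^ 2 + 4 * ε * v)) / (2 * v)

noncomputable def intermediateDensity (um up vm vp ε : ℝ) : ℝ :=
  (up - um - shockSlopePlus up vp ε * vp + shockSlopeMinus um vm ε * vm) /
    (shockSlopeMinus um vm ε - shockSlopePlus up vp ε)

theorem tendsto_sqrt_sq_add {u : ℝ} (v : ℝ) (hu : 0 ≤ u) :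
    Tendsto (fun ε : ℝ => √(u ^ 2 + 4 * ε * v)) (𝓝 0) (𝓝 u) := by
  simpa [Real.sqrt_sq hu] using
    (by fun_prop : Continuous fun ε : ℝ => √(u ^ 2 + 4 * ε * v)).tendsto 0

theorem tendsto_shockSlopePlus {u : ℝ} (v : ℝ) (hu : 0 ≤ u) :
    Tendsto (shockSlopePlus u v) (𝓝 0) (𝓝 (u / v)) := by
  have h := (tendsto_const_nhds (x := u)).add (tendsto_sqrt_sq_add v hu) |>.div_const (2 * v)
  rwa [← two_mul, mul_div_mul_left _ _ two_ne_zero] at h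

theorem tendsto_shockSlopeMinus {u : ℝ} (v : ℝ) (hu : 0 ≤ u) :
    Tendsto (shockSlopeMinus u v) (𝓝 0) (𝓝 0) := by
  have h := (tendsto_const_nhds (x := u)).sub (tendsto_sqrt_sq_add v hu) |>.div_const (2 * v)
  rwa [sub_self, zero_div] at h

theorem tendsto_intermediateDensity {um up vp : ℝ} (vm : ℝ) (hum : 0 ≤ um) (hup : 0 < up)
    (hvp : vp ≠ 0) :
    Tendsto (intermediateDensity um up vm vp) (𝓝 0) (𝓝 (um * vp / up)) := by
  have hplus := tendsto_shockSlopePlus vp hup.le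
  have hminus := tendsto_shockSlopeMinus vm hum
  have hden : (0 : ℝ) - up / vp ≠ 0 := by
    rw [zero_sub, neg_ne_zero]
    exact div_ne_zero hup.ne' hvp
  have hnum := ((tendsto_const_nhds (x := up - um)).sub (hplus.mul_const vp)).add
    (hminus.mul_const vm)
  have h := hnum.div (hminus.sub hplus) hden
  have hvalue : (up - um - up / vp * vp + 0 * vm) / (0 - up / vp) = um * vp / up := by
    rw [zero_mul, add_zero, div_mul_cancel₀ up hvp, sub_sub_cancel_left, zero_sub,
      neg_div_neg_eq, div_div_eq_mul_div]
  rwa [hvalue] at h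

theorem sigma2_limit_general (um up vm vp : ℝ) (h : um > up) (hp : up > 0)
    (hvp : 0 < vp) :
    Filter.Tendsto (fun e : ℝ =>
      up + ((up + Real.sqrt (up ^ 2 + 4 * e * vp)) / (2 * vp)) *
        ((up - um - ((up + Real.sqrt (up ^ 2 + 4 * e * vp)) / (2 * vp)) * vp + ((um - Real.sqrt (um ^ 2 + 4 * e * vm)) / (2 * vm)) * vm) / ((um - Real.sqrt (um ^ 2 + 4 * e * vm)) / (2 * vm) - (up + Real.sqrt (up ^ 2 + 4 * e * vp)) / (2 * vp))))
      (nhdsWithin 0 (Set.Ioi 0)) (nhds (um + up)) := by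
  have hum : 0 ≤ um := (hp.trans h).le
  have hsigma : Tendsto (fun ε => up + shockSlopePlus up vp ε * intermediateDensity um up vm vp ε)
      (𝓝 0) (𝓝 (up + up / vp * (um * vp / up))) :=
    tendsto_const_nhds.add
      ((tendsto_shockSlopePlus vp hp.le).mul (tendsto_intermediateDensity vm hum hp hvp.ne'))
  have hvalue : up + up / vp * (um * vp / up) = um + up := by
    field_simp
    ring
  rw [hvalue] at hsigma
  exact hsigma.mono_left nhdsWithin_le_nhds

theorem sigma2_limit (um up vm vp : ℝ) (h : um > up) (hp : up > 0)
    (hvm : 0 < vm) (hvp : 0 < vp) (hr : up / vp < um / vm) :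
    Filter.Tendsto (fun e : ℝ =>
      up + ((up + Real.sqrt (up ^ 2 + 4 * e * vp)) / (2 * vp)) *
        ((up - um - ((up + Real.sqrt (up ^ 2 + 4 * e * vp)) / (2 * vp)) * vp + ((um - Real.sqrt (um ^ 2 + 4 * e * vm)) / (2 * vm)) * vm) / ((um - Real.sqrt (um ^ 2 + 4 * e * vm)) / (2 * vm) - (up + Real.sqrt (up ^ 2 + 4 * e * vp)) / (2 * vp))))
      (nhdsWithin 0 (Set.Ioi 0)) (nhds (um + up)) :=
  sigma2_limit_general um up vm vp h hp hvp
end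

section
/- Let u_+ > u_-, v_± > 0, u_+/v_+ > u_- /v_-. Define v_*(ε) = (u_+ - u_- - ((u_+ + √(u_+² + 4ε v_+))/(2v_+))v_+ + ((u_- - √(u_-² + 4ε v_-))/(2v_-))v_-) / ((u_- - √(u_-² + 4ε v_-))/(2v_-) - (u_+ + √(u_+² + 4ε v_+))/(2v_+)). Then as ε → 0⁺: v_*(ε) → (u_- /u_+)v_+ if u_+ > u_- > 0; v_*(ε) → (u_+/u_-)v_- if 0 > u_+ > u_-; and v_*(ε) → 0 if u_+ > 0 > u_-. -/
open Filter

lemma sqrt_tendsto_abs (u v : ℝ) :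
    Tendsto (fun e : ℝ => Real.sqrt (u ^ 2 + 4 * e * v)) (nhds 0) (nhds |u|) := by
  have hc : Continuous fun e : ℝ => Real.sqrt (u ^ 2 + 4 * e * v) := by
    exact Real.continuous_sqrt.comp (by continuity)
  have := hc.tendsto 0
  simpa [Real.sqrt_sq_eq_abs] using this

lemma vstar_main (um up vm vp : ℝ) (L : ℝ)
    (hD : (um - |um|) / (2 * vm) - (up + |up|) / (2 * vp) ≠ 0)
    (hL : L = (up - um - ((up + |up|) / (2 * vp)) * vp + ((um - |um|) / (2 * vm)) * vm) /
      ((um - |um|) / (2 * vm) - (up + |up|) / (2 * vp))) :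
    Tendsto (fun e : ℝ => (up - um - ((up + Real.sqrt (up ^ 2 + 4 * e * vp)) / (2 * vp)) * vp + ((um - Real.sqrt (um ^ 2 + 4 * e * vm)) / (2 * vm)) * vm) / ((um - Real.sqrt (um ^ 2 + 4 * e * vm)) / (2 * vm) - (up + Real.sqrt (up ^ 2 + 4 * e * vp)) / (2 * vp)))
      (nhdsWithin 0 (Set.Ioi 0)) (nhds L) := by
  have h1 := sqrt_tendsto_abs up vp
  have h2 := sqrt_tendsto_abs um vm
  have hN : Tendsto (fun e : ℝ => up - um - ((up + Real.sqrt (up ^ 2 + 4 * e * vp)) / (2 * vp)) * vp + ((um - Real.sqrt (um ^ 2 + 4 * e * vm)) / (2 * vm)) * vm)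
      (nhds 0) (nhds (up - um - ((up + |up|) / (2 * vp)) * vp + ((um - |um|) / (2 * vm)) * vm)) :=
    (tendsto_const_nhds.sub (((tendsto_const_nhds.add h1).div_const _).mul_const vp)).add
      (((tendsto_const_nhds.sub h2).div_const _).mul_const vm)
  have hDt : Tendsto (fun e : ℝ => (um - Real.sqrt (um ^ 2 + 4 * e * vm)) / (2 * vm) - (up + Real.sqrt (up ^ 2 + 4 * e * vp)) / (2 * vp))
      (nhds 0) (nhds ((um - |um|) / (2 * vm) - (up + |up|) / (2 * vp))) :=
    ((tendsto_const_nhds.sub h2).div_const _).sub ((tendsto_const_nhds.add h1).div_const _)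
  have := hN.div hDt hD
  rw [hL]
  exact this.mono_left nhdsWithin_le_nhds

theorem vstar_rarefaction_limits (um up vm vp : ℝ) (h : up > um)
    (hvm : 0 < vm) (hvp : 0 < vp) (hr : up / vp > um / vm) :
    (up > um ∧ um > 0 →
      Filter.Tendsto (fun e : ℝ => (up - um - ((up + Real.sqrt (up ^ 2 + 4 * e * vp)) / (2 * vp)) * vp + ((um - Real.sqrt (um ^ 2 + 4 * e * vm)) / (2 * vm)) * vm) / ((um - Real.sqrt (um ^ 2 + 4 * e * vm)) / (2 * vm) - (up + Real.sqrt (up ^ 2 + 4 * e * vp)) / (2 * vp)))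
        (nhdsWithin 0 (Set.Ioi 0)) (nhds ((um / up) * vp))) ∧
    ((0 : ℝ) > up ∧ up > um →
      Filter.Tendsto (fun e : ℝ => (up - um - ((up + Real.sqrt (up ^ 2 + 4 * e * vp)) / (2 * vp)) * vp + ((um - Real.sqrt (um ^ 2 + 4 * e * vm)) / (2 * vm)) * vm) / ((um - Real.sqrt (um ^ 2 + 4 * e * vm)) / (2 * vm) - (up + Real.sqrt (up ^ 2 + 4 * e * vp)) / (2 * vp)))
        (nhdsWithin 0 (Set.Ioi 0)) (nhds ((up / um) * vm))) ∧
    (up > 0 ∧ (0 : ℝ) > um →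
      Filter.Tendsto (fun e : ℝ => (up - um - ((up + Real.sqrt (up ^ 2 + 4 * e * vp)) / (2 * vp)) * vp + ((um - Real.sqrt (um ^ 2 + 4 * e * vm)) / (2 * vm)) * vm) / ((um - Real.sqrt (um ^ 2 + 4 * e * vm)) / (2 * vm) - (up + Real.sqrt (up ^ 2 + 4 * e * vp)) / (2 * vp)))
        (nhdsWithin 0 (Set.Ioi 0)) (nhds 0)) := by
  have hvm' := hvm.ne'
  have hvp' := hvp.ne'
  refine ⟨?_, ?_, ?_⟩
  · rintro ⟨-, hum⟩
    have hup : 0 < up := lt_trans hum h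
    have ha1 : |up| = up := abs_of_pos hup
    have ha2 : |um| = um := abs_of_pos hum
    apply vstar_main
    · rw [ha1, ha2]
      have : (um - um) / (2 * vm) - (up + up) / (2 * vp) = -(up / vp) := by
        field_simp; ring
      rw [this]
      simp [hup.ne', hvp.ne']
    · rw [ha1, ha2]
      field_simp [hup.ne']
      ring
  · rintro ⟨hup, -⟩
    have hum : um < 0 := lt_trans h hup
    have ha1 : |up| = -up := abs_of_neg hup
    have ha2 : |um| = -um := abs_of_neg hum
    apply vstar_main
    · rw [ha1, ha2]
      have : (um - -um) / (2 * vm) - (up + -up) / (2 * vp) = um / vm := by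
        field_simp; ring
      rw [this]
      simp [hum.ne, hvm.ne']
    · rw [ha1, ha2]
      field_simp [hum.ne]
      ring
  · rintro ⟨hup, hum⟩
    have ha1 : |up| = up := abs_of_pos hup
    have ha2 : |um| = -um := abs_of_neg hum
    apply vstar_main
    · rw [ha1, ha2]
      have : (um - -um) / (2 * vm) - (up + up) / (2 * vp) = um / vm - up / vp := by
        field_simp; ring
      rw [this]
      exact sub_ne_zero.mpr (ne_of_lt hr)
    · rw [ha1, ha2]
      have hnum : up - um - (up + up) / (2 * vp) * vp + (um - -um) / (2 * vm) * vm = 0 := by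
        field_simp
        ring
      rw [hnum, zero_div]
end

section
/- For ε > 0, v > 0, u ∈ ℝ, along any curve v = v(u) with dv/du = 2v₀/(u₀ - √(u₀² + 4εv₀)) constant (the 1-rarefaction line through (u₀,v₀)), the characteristic root λ₁^ε(u,v) = u + (u - √(u²+4εv))/2 satisfies dλ₁^ε/du = 2; similarly along the 2-rarefaction line through (u₀,v₀), λ₂^ε(u,v) = u + (u + √(u²+4εv))/2 satisfies dλ₂^ε/du = 2. -/
/-!
Write `s = √(u₀² + 4εv₀)`, so that `c = u₀ ± s` are the roots of `c² = 2u₀c + 4εv₀` and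
`(u₀ - s)(u₀ + s) = -4εv₀`. The latter turns the slope `2v₀/(u₀ ∓ s)` of the rarefaction line
into `-(u₀ ± s)/(2ε)`, and the former then makes the discriminant a perfect square along it:
`u² + 4εv(u) = (u - c)²` with `c = u₀ + s` on the 1-line and `c = u₀ - s` on the 2-line.
Hence `λ₁ = u + (u - |u - c|)/2` and `λ₂ = u + (u + |u - c|)/2`, and `v > 0` puts `u` on the
side of `c` where both are `2u - c/2`.
-/

open Real

lemma two_mul_div_eq_neg_div_of_mul_eq {ε v₀ a b : ℝ} (hε : ε ≠ 0) (ha : a ≠ 0)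
    (hab : a * b = -(4 * ε * v₀)) : 2 * v₀ / a = -b / (2 * ε) := by
  rw [div_eq_div_iff ha (mul_ne_zero two_ne_zero hε)]
  linarith

lemma sq_add_mul_line_eq_sq_sub {ε u₀ v₀ c : ℝ} (hε : ε ≠ 0)
    (hc : c ^ 2 = 2 * u₀ * c + 4 * ε * v₀) (x : ℝ) :
    x ^ 2 + 4 * ε * (v₀ + -c / (2 * ε) * (x - u₀)) = (x - c) ^ 2 := by
  field_simp
  linear_combination -2 * hc

lemma hasDerivAt_add_sub_abs_sub {c u : ℝ} (hu : u < c) :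
    HasDerivAt (fun x => x + (x - |x - c|) / 2) 2 u := by
  have habs : HasDerivAt (fun x => |x - c|) (-1) u :=
    (hasDerivAt_abs_neg (sub_neg.2 hu)).comp_sub_const u c
  exact ((hasDerivAt_id' u).add (((hasDerivAt_id' u).sub habs).div_const 2)).congr_deriv
    (by norm_num)

lemma hasDerivAt_add_add_abs_sub {c u : ℝ} (hu : c < u) :
    HasDerivAt (fun x => x + (x + |x - c|) / 2) 2 u := by
  have habs : HasDerivAt (fun x => |x - c|) 1 u :=
    (hasDerivAt_abs_pos (sub_pos.2 hu)).comp_sub_const u c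
  exact ((hasDerivAt_id' u).add (((hasDerivAt_id' u).add habs).div_const 2)).congr_deriv
    (by norm_num)

section RarefactionLine

variable {ε u₀ v₀ c u : ℝ}

lemma hasDerivAt_add_sub_sqrt_along_line (hε : 0 < ε) (hc : c ^ 2 = 2 * u₀ * c + 4 * ε * v₀)
    (hc₀ : 0 < c) (hv : 0 < v₀ + -c / (2 * ε) * (u - u₀)) :
    HasDerivAt (fun x => x + (x - √(x ^ 2 + 4 * ε * (v₀ + -c / (2 * ε) * (x - u₀)))) / 2)
      2 u := by
  have hsq := sq_add_mul_line_eq_sq_sub hε.ne' hc u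
  have hu : u < c := by nlinarith
  simp_rw [sq_add_mul_line_eq_sq_sub hε.ne' hc, sqrt_sq_eq_abs]
  exact hasDerivAt_add_sub_abs_sub hu

lemma hasDerivAt_add_add_sqrt_along_line (hε : 0 < ε) (hc : c ^ 2 = 2 * u₀ * c + 4 * ε * v₀)
    (hc₀ : c < 0) (hv : 0 < v₀ + -c / (2 * ε) * (u - u₀)) :
    HasDerivAt (fun x => x + (x + √(x ^ 2 + 4 * ε * (v₀ + -c / (2 * ε) * (x - u₀)))) / 2)
      2 u := by
  have hsq := sq_add_mul_line_eq_sq_sub hε.ne' hc u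
  have hu : c < u := by nlinarith
  simp_rw [sq_add_mul_line_eq_sq_sub hε.ne' hc, sqrt_sq_eq_abs]
  exact hasDerivAt_add_add_abs_sub hu

end RarefactionLine

theorem lambda_deriv_along_rarefaction (ε u0 v0 u : ℝ) (hε : 0 < ε) (hv0 : 0 < v0)
    (hv1 : 0 < v0 + (2 * v0 / (u0 - Real.sqrt (u0 ^ 2 + 4 * ε * v0))) * (u - u0))
    (hv2 : 0 < v0 + (2 * v0 / (u0 + Real.sqrt (u0 ^ 2 + 4 * ε * v0))) * (u - u0)) :
    HasDerivAt (fun u : ℝ =>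
      u + (u - Real.sqrt (u ^ 2 + 4 * ε *
        (v0 + (2 * v0 / (u0 - Real.sqrt (u0 ^ 2 + 4 * ε * v0))) * (u - u0)))) / 2)
      2 u ∧
    HasDerivAt (fun u : ℝ =>
      u + (u + Real.sqrt (u ^ 2 + 4 * ε *
        (v0 + (2 * v0 / (u0 + Real.sqrt (u0 ^ 2 + 4 * ε * v0))) * (u - u0)))) / 2)
      2 u := by
  set s := √(u0 ^ 2 + 4 * ε * v0)
  have hs : s ^ 2 = u0 ^ 2 + 4 * ε * v0 := sq_sqrt (by positivity)
  obtain ⟨hs_lo, hs_hi⟩ : -s < u0 ∧ u0 < s :=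
    abs_lt.1 <| (lt_sqrt (abs_nonneg u0)).2 (by rw [sq_abs]; nlinarith)
  have hslope₁ : 2 * v0 / (u0 - s) = -(u0 + s) / (2 * ε) :=
    two_mul_div_eq_neg_div_of_mul_eq hε.ne' (by linarith) (by linear_combination -hs)
  have hslope₂ : 2 * v0 / (u0 + s) = -(u0 - s) / (2 * ε) :=
    two_mul_div_eq_neg_div_of_mul_eq hε.ne' (by linarith) (by linear_combination -hs)
  rw [hslope₁] at hv1 ⊢
  rw [hslope₂] at hv2 ⊢
  exact ⟨hasDerivAt_add_sub_sqrt_along_line hε (by linear_combination hs) (by linarith) hv1,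
    hasDerivAt_add_add_sqrt_along_line hε (by linear_combination hs) (by linarith) hv2⟩
end

section
/- Let u_- ≥ 0 ≥ u_+, u_- > u_+, v_± > 0, and let σ = u_- + u_+ and H(x) = v_- for x < 0, v_+ for x > 0. Suppose v^ε : ℝ → ℝ is given by v^ε(ξ) = v_- for ξ < σ₁(ε), v^ε(ξ) = v_*(ε) for σ₁(ε) < ξ < σ₂(ε), v^ε(ξ) = v_+ for ξ > σ₂(ε), where σ₁(ε), σ₂(ε) → σ as ε → 0⁺, σ₁(ε) < σ₂(ε), and (σ₂(ε) - σ₁(ε))·v_*(ε) → u_- v_+ - u_+ v_-. Then for every continuous compactly supported test function φ : ℝ → ℝ, ∫ (v^ε(ξ) - H(ξ - σ)) φ(ξ) dξ → (u_- v_+ - u_+ v_-) φ(σ) as ε → 0⁺; i.e., v^ε converges in the sense of distributions to H(· - σ) + (u_- v_+ - u_+ v_-) δ_σ. -/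
/-!
Off the two shock points, `v^ε - H(· - σ)` is the sum of a jump `v₊ - v₋` on `[σ₁, σ)` and a
jump `v_* - v₊` on `[σ₁, σ₂)`, so its pairing with `φ` is
`(v₊ - v₋) ∫_{σ₁}^{σ} φ + (v_* - v₊) ∫_{σ₁}^{σ₂} φ`.
By the fundamental theorem of calculus, `w ∫_a^b φ = (b - a) w φ(σ) + w · o(b - a)` as `a, b → σ`,
so `w ∫_a^b φ → L φ(σ)` whenever `(b - a) w → L`; the two weights have limits `0` and
`u₋ v₊ - u₊ v₋`.
-/

open MeasureTheory Filter Asymptotics Set Topology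

theorem tendsto_smul_intervalIntegral_of_tendsto_mul
    {E : Type*} [NormedAddCommGroup E] [NormedSpace ℝ E] [CompleteSpace E]
    {ι : Type*} {l : Filter ι} {φ : ℝ → E} {s L : ℝ} {a b w : ι → ℝ}
    (hφm : StronglyMeasurableAtFilter φ (𝓝 s)) (hφ : ContinuousAt φ s)
    (ha : Tendsto a l (𝓝 s)) (hb : Tendsto b l (𝓝 s))
    (hw : Tendsto (fun e => (b e - a e) * w e) l (𝓝 L)) :
    Tendsto (fun e => w e • ∫ x in a e..b e, φ x) l (𝓝 (L • φ s)) := by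
  have hfirst : (fun e => (∫ x in a e..b e, φ x) - (b e - a e) • φ s) =o[l] (b - a) :=
    intervalIntegral.integral_sub_linear_isLittleO_of_tendsto_ae hφm
      (hφ.mono_left inf_le_left) ha hb
  have herr : Tendsto (fun e => w e • ((∫ x in a e..b e, φ x) - (b e - a e) • φ s)) l (𝓝 0) := by
    refine (isLittleO_one_iff ℝ).mp (((isBigO_refl w l).smul_isLittleO hfirst).trans_isBigO ?_)
    simpa only [Pi.sub_apply, smul_eq_mul, mul_comm] using hw.isBigO_one ℝ
  have hmain : Tendsto (fun e => ((b e - a e) * w e) • φ s) l (𝓝 (L • φ s)) :=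
    hw.smul_const _
  simpa [smul_sub, smul_smul, mul_comm] using hmain.add herr

section StepFunction

variable {φ : ℝ → ℝ} {c d l r : ℝ}

theorem ite_lt_sub_ite_lt_mul_eq (ξ : ℝ) :
    ((if ξ < c then l else r) - (if ξ < d then l else r)) * φ ξ
      = (l - r) * ((Iio c).indicator φ ξ - (Iio d).indicator φ ξ) := by
  simp only [indicator, mem_Iio]
  split_ifs <;> ring

theorem MeasureTheory.Integrable.ite_lt_sub_ite_lt_mul (hφ : Integrable φ) :
    Integrable fun ξ => ((if ξ < c then l else r) - (if ξ < d then l else r)) * φ ξ := by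
  simp only [ite_lt_sub_ite_lt_mul_eq]
  exact ((hφ.indicator measurableSet_Iio).sub (hφ.indicator measurableSet_Iio)).const_mul _

theorem integral_ite_lt_sub_ite_lt_mul (hφ : Integrable φ) :
    ∫ ξ, ((if ξ < c then l else r) - (if ξ < d then l else r)) * φ ξ
      = (r - l) * ∫ ξ in c..d, φ ξ := by
  simp only [ite_lt_sub_ite_lt_mul_eq]
  rw [integral_const_mul, integral_sub (hφ.indicator measurableSet_Iio)
      (hφ.indicator measurableSet_Iio), integral_indicator measurableSet_Iio,
    integral_indicator measurableSet_Iio, ← integral_Iic_eq_integral_Iio,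
    ← integral_Iic_eq_integral_Iio,
    intervalIntegral.integral_Iic_sub_Iic hφ.integrableOn hφ.integrableOn,
    intervalIntegral.integral_symm]
  ring

end StepFunction

theorem integral_sub_ite_lt_mul_of_piecewise {φ : ℝ → ℝ} (hφ : Integrable φ) {v : ℝ → ℝ}
    {a b s vm w vp : ℝ} (hab : a ≤ b)
    (hv : ∀ ξ, (ξ < a → v ξ = vm) ∧ (a < ξ ∧ ξ < b → v ξ = w) ∧ (b < ξ → v ξ = vp)) :
    ∫ ξ, (v ξ - (if ξ < s then vm else vp)) * φ ξ
      = (vp - vm) * (∫ ξ in a..s, φ ξ) + (w - vp) * ∫ ξ in a..b, φ ξ := by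
  have hae : (fun ξ => (v ξ - (if ξ < s then vm else vp)) * φ ξ) =ᵐ[volume] fun ξ =>
      ((if ξ < a then vm else vp) - (if ξ < s then vm else vp)) * φ ξ
        + ((if ξ < a then 0 else w - vp) - (if ξ < b then 0 else w - vp)) * φ ξ := by
    filter_upwards [measure_eq_zero_iff_ae_notMem.mp
      (((finite_singleton b).insert a).measure_zero volume)] with ξ hξ
    simp only [mem_insert_iff, mem_singleton_iff, not_or] at hξ
    obtain ⟨hv_left, hv_mid, hv_right⟩ := hv ξ
    rcases lt_or_gt_of_ne hξ.1 with hξa | hξa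
    · rw [hv_left hξa, if_pos hξa, if_pos hξa, if_pos (hξa.trans_le hab)]
      ring
    rcases lt_or_gt_of_ne hξ.2 with hξb | hξb
    · rw [hv_mid ⟨hξa, hξb⟩, if_neg hξa.not_gt, if_neg hξa.not_gt, if_pos hξb]
      ring
    · rw [hv_right hξb, if_neg hξa.not_gt, if_neg hξa.not_gt, if_neg hξb.not_gt]
      ring
  rw [integral_congr_ae hae, integral_add hφ.ite_lt_sub_ite_lt_mul hφ.ite_lt_sub_ite_lt_mul,
    integral_ite_lt_sub_ite_lt_mul hφ, integral_ite_lt_sub_ite_lt_mul hφ]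
  ring

theorem density_converges_to_delta_general (um up vm vp : ℝ)
    (σ₁ σ₂ vstar : ℝ → ℝ) (vε : ℝ → ℝ → ℝ)
    (hσ1 : Tendsto σ₁ (nhdsWithin 0 (Set.Ioi 0)) (nhds (um + up)))
    (hσ2 : Tendsto σ₂ (nhdsWithin 0 (Set.Ioi 0)) (nhds (um + up)))
    (horder : ∀ e : ℝ, 0 < e → σ₁ e < σ₂ e)
    (hw : Tendsto (fun e => (σ₂ e - σ₁ e) * vstar e)
      (nhdsWithin 0 (Set.Ioi 0)) (nhds (um * vp - up * vm)))
    (hpiece : ∀ e : ℝ, 0 < e → ∀ ξ : ℝ,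
      (ξ < σ₁ e → vε e ξ = vm) ∧
      (σ₁ e < ξ ∧ ξ < σ₂ e → vε e ξ = vstar e) ∧
      (σ₂ e < ξ → vε e ξ = vp)) :
    ∀ φ : ℝ → ℝ, Continuous φ → HasCompactSupport φ →
      Tendsto (fun e => ∫ ξ : ℝ,
          (vε e ξ - (if ξ - (um + up) < 0 then vm else vp)) * φ ξ)
        (nhdsWithin 0 (Set.Ioi 0))
        (nhds ((um * vp - up * vm) * φ (um + up))) := by
  intro φ hφc hφs
  set s := um + up
  have hφm : StronglyMeasurableAtFilter φ (𝓝 s) := hφc.stronglyMeasurableAtFilter _ _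
  have hsplit : ∀ᶠ e in 𝓝[>] 0,
      (vp - vm) * (∫ ξ in σ₁ e..s, φ ξ) + (vstar e - vp) * (∫ ξ in σ₁ e..σ₂ e, φ ξ)
        = ∫ ξ, (vε e ξ - (if ξ - s < 0 then vm else vp)) * φ ξ := by
    filter_upwards [self_mem_nhdsWithin] with e he
    simp only [sub_neg]
    exact (integral_sub_ite_lt_mul_of_piecewise (hφc.integrable_of_hasCompactSupport hφs)
      (horder e he).le (hpiece e he)).symm
  have hshift : Tendsto (fun e => (vp - vm) * ∫ ξ in σ₁ e..s, φ ξ) (𝓝[>] 0) (𝓝 0) := by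
    simpa using tendsto_smul_intervalIntegral_of_tendsto_mul hφm hφc.continuousAt hσ1
      tendsto_const_nhds ((tendsto_const_nhds.sub hσ1).mul_const (vp - vm))
  have hshock : Tendsto (fun e => (vstar e - vp) * ∫ ξ in σ₁ e..σ₂ e, φ ξ) (𝓝[>] 0)
      (𝓝 ((um * vp - up * vm) * φ s)) := by
    have hweight := hw.sub ((hσ2.sub hσ1).mul_const vp)
    simp only [sub_self, zero_mul, sub_zero, ← mul_sub] at hweight
    exact tendsto_smul_intervalIntegral_of_tendsto_mul hφm hφc.continuousAt hσ1 hσ2 hweight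
  simpa using (hshift.add hshock).congr' hsplit

theorem density_converges_to_delta (um up vm vp : ℝ)
    (h1 : um ≥ 0) (h2 : 0 ≥ up) (h3 : um > up) (hvm : 0 < vm) (hvp : 0 < vp)
    (σ₁ σ₂ vstar : ℝ → ℝ) (vε : ℝ → ℝ → ℝ)
    (hσ1 : Tendsto σ₁ (nhdsWithin 0 (Set.Ioi 0)) (nhds (um + up)))
    (hσ2 : Tendsto σ₂ (nhdsWithin 0 (Set.Ioi 0)) (nhds (um + up)))
    (horder : ∀ e : ℝ, 0 < e → σ₁ e < σ₂ e)
    (hw : Tendsto (fun e => (σ₂ e - σ₁ e) * vstar e)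
      (nhdsWithin 0 (Set.Ioi 0)) (nhds (um * vp - up * vm)))
    (hpiece : ∀ e : ℝ, 0 < e → ∀ ξ : ℝ,
      (ξ < σ₁ e → vε e ξ = vm) ∧
      (σ₁ e < ξ ∧ ξ < σ₂ e → vε e ξ = vstar e) ∧
      (σ₂ e < ξ → vε e ξ = vp)) :
    ∀ φ : ℝ → ℝ, Continuous φ → HasCompactSupport φ →
      Tendsto (fun e => ∫ ξ : ℝ,
          (vε e ξ - (if ξ - (um + up) < 0 then vm else vp)) * φ ξ)
        (nhdsWithin 0 (Set.Ioi 0))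
        (nhds ((um * vp - up * vm) * φ (um + up))) :=
  density_converges_to_delta_general um up vm vp σ₁ σ₂ vstar vε hσ1 hσ2 horder hw hpiece
end
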